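/- arXiv:1403.7701 — 3 statements merged into one kernel-verified Lean document; each statement's English description precedes it below -/
import Mathlib

section
/- Let X and Y be real-valued random variables. If for every finite partition G of the real line into intervals (with each slice having positive probability), the statistic K^G = max_{l,m} sup_x |P(X <= x | H=l) - P(X <= x | H=m)| equals 0, then X is independent of Y. -/
open MeasureTheory ProbabilityTheory Set

/-- If for every finite partition of `ℝ` into intervals (each slice having positive probability
under the law of `Y`) the pairwise Kolmogorov statistic `K^G` vanishes, i.e. the conditional
CDFs of `X` given the slice index of `Y` coincide across all slices, then `X` is independent
of `Y`. -/
theorem stmt_1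
    {Ω : Type*} [MeasurableSpace Ω] (μ : Measure Ω) [IsProbabilityMeasure μ]
    (X Y : Ω → ℝ) (hX : Measurable X) (hY : Measurable Y)
    (hK : ∀ (G : ℕ) (slice : Fin G → Set ℝ),
      (∀ l, MeasurableSet (slice l)) →
      (∀ l, (slice l).OrdConnected) →
      Pairwise (Function.onFun Disjoint slice) →
      (⋃ l, slice l) = Set.univ →
      (∀ l, 0 < μ (Y ⁻¹' slice l)) →
      ∀ l m : Fin G, ∀ x : ℝ,
        (μ ({ω | X ω ≤ x} ∩ Y ⁻¹' slice l)).toReal / (μ (Y ⁻¹' slice l)).toReal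
          = (μ ({ω | X ω ≤ x} ∩ Y ⁻¹' slice m)).toReal / (μ (Y ⁻¹' slice m)).toReal) :
    IndepFun X Y μ := by
  have key : ∀ x y : ℝ,
      μ (X ⁻¹' Iic x ∩ Y ⁻¹' Iic y) = μ (X ⁻¹' Iic x) * μ (Y ⁻¹' Iic y) := by
    intro x y
    set p := μ (Y ⁻¹' Iic y) with hp_def
    set q := μ (Y ⁻¹' Ioi y) with hq_def
    set a := μ (X ⁻¹' Iic x ∩ Y ⁻¹' Iic y) with ha_def
    set b := μ (X ⁻¹' Iic x ∩ Y ⁻¹' Ioi y) with hb_def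
    set c := μ (X ⁻¹' Iic x) with hc_def
    have hdisj : Disjoint (Y ⁻¹' Iic y) (Y ⁻¹' Ioi y) :=
      (Iic_disjoint_Ioi le_rfl).preimage Y
    have hpq : p + q = 1 := by
      rw [hp_def, hq_def, ← measure_union hdisj (hY measurableSet_Ioi),
        ← Set.preimage_union, Iic_union_Ioi, Set.preimage_univ, measure_univ]
    have hab : a + b = c := by
      rw [ha_def, hb_def, ← measure_union (hdisj.mono inter_subset_right inter_subset_right)
        ((hX measurableSet_Iic).inter (hY measurableSet_Ioi)),
        ← Set.inter_union_distrib_left, ← Set.preimage_union, Iic_union_Ioi,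
        Set.preimage_univ, Set.inter_univ]
    have hpt : p ≠ ⊤ := measure_ne_top μ _
    have hqt : q ≠ ⊤ := measure_ne_top μ _
    have hat : a ≠ ⊤ := measure_ne_top μ _
    have hbt : b ≠ ⊤ := measure_ne_top μ _
    have hct : c ≠ ⊤ := measure_ne_top μ _
    rcases eq_or_ne p 0 with hp0 | hp0
    · have ha0 : a = 0 := le_antisymm (hp0 ▸ measure_mono inter_subset_right) (zero_le)
      rw [ha0, hp0, mul_zero]
    rcases eq_or_ne q 0 with hq0 | hq0
    · have hb0 : b = 0 := le_antisymm (hq0 ▸ measure_mono inter_subset_right) (zero_le)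
      have hp1 : p = 1 := by rw [hq0, add_zero] at hpq; exact hpq
      rw [hp1, mul_one, ← hab, hb0, add_zero]
    · -- both slices have positive measure; apply the hypothesis
      have hposp : 0 < p := pos_iff_ne_zero.mpr hp0
      have hposq : 0 < q := pos_iff_ne_zero.mpr hq0
      have heq := hK 2 ![Iic y, Ioi y]
        (by intro l; fin_cases l <;> simp [measurableSet_Iic, measurableSet_Ioi])
        (by intro l; fin_cases l
            · show (Iic y).OrdConnected; exact ordConnected_Iic
            · show (Ioi y).OrdConnected; exact ordConnected_Ioi)
        (by intro i j hij
            fin_cases i <;> fin_cases j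
            · exact absurd rfl hij
            · show Disjoint (Iic y) (Ioi y); exact Iic_disjoint_Ioi le_rfl
            · show Disjoint (Ioi y) (Iic y); exact (Iic_disjoint_Ioi le_rfl).symm
            · exact absurd rfl hij)
        (by ext z; simp [Fin.exists_fin_two, le_or_gt])
        (by intro l; fin_cases l
            · show 0 < μ (Y ⁻¹' Iic y); exact hposp
            · show 0 < μ (Y ⁻¹' Ioi y); exact hposq)
        0 1 x
      simp only [Matrix.cons_val_zero, Matrix.cons_val_one, Matrix.head_cons] at heq
      have heq' : a.toReal / p.toReal = b.toReal / q.toReal := by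
        convert heq using 3 <;> rfl
      have hprpos : 0 < p.toReal := ENNReal.toReal_pos hp0 hpt
      have hqrpos : 0 < q.toReal := ENNReal.toReal_pos hq0 hqt
      have hcross : a.toReal * q.toReal = b.toReal * p.toReal := by
        field_simp at heq'
        linarith [heq']
      have hsum1 : p.toReal + q.toReal = 1 := by
        rw [← ENNReal.toReal_add hpt hqt, hpq, ENNReal.toReal_one]
      have hsum2 : a.toReal + b.toReal = c.toReal := by
        rw [← ENNReal.toReal_add hat hbt, hab]
      have h1 : c.toReal * p.toReal = a.toReal * p.toReal + a.toReal * q.toReal := by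
        rw [← hsum2]; nlinarith [hcross]
      have h2 : a.toReal * p.toReal + a.toReal * q.toReal = a.toReal := by
        rw [← mul_add, hsum1, mul_one]
      have hfin : a.toReal = c.toReal * p.toReal := by linarith
      refine (ENNReal.toReal_eq_toReal_iff' hat ?_).mp ?_
      · exact ENNReal.mul_ne_top hct hpt
      · rw [ENNReal.toReal_mul]; exact hfin
  show Indep (MeasurableSpace.comap X inferInstance) (MeasurableSpace.comap Y inferInstance) μ
  have hgen : (inferInstance : MeasurableSpace ℝ)
      = MeasurableSpace.generateFrom (range Iic) := borel_eq_generateFrom_Iic ℝ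
  refine IndepSets.indep hX.comap_le hY.comap_le (isPiSystem_Iic.comap X)
    (isPiSystem_Iic.comap Y) ?_ ?_ ?_
  · rw [hgen, MeasurableSpace.comap_generateFrom]; rfl
  · rw [hgen, MeasurableSpace.comap_generateFrom]; rfl
  · rintro _ _ ⟨_, ⟨x, rfl⟩, rfl⟩ ⟨_, ⟨y, rfl⟩, rfl⟩
    exact Filter.Eventually.of_forall fun _ => key x y
end

section
/- Let (X, Y) be jointly standard bivariate normal with correlation rho, and slice Y at its l/G-th quantiles for l = 1,...,G-1 (so a_l = Phi^{-1}(l/G) and H = l iff a_{l-1} <= Y < a_l with a_0 = -infinity, a_G = +infinity). Then K^G = max_{l,m} sup_x |F(x|H=l) - F(x|H=m)| = G * integral from -infinity to Phi^{-1}(1/G) of (2*Phi(-|rho| y / sqrt(1 - rho^2)) - 1) * phi(y) dy, where phi is the standard normal density. -/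
open MeasureTheory ProbabilityTheory Set intervalIntegral

noncomputable def phi : ℝ → ℝ := gaussianPDFReal 0 1
noncomputable def Phi : ℝ → ℝ := fun x => cdf (gaussianReal 0 1) x

lemma phi_nonneg (x : ℝ) : 0 ≤ phi x := gaussianPDFReal_nonneg 0 1 x
lemma phi_pos (x : ℝ) : 0 < phi x := gaussianPDFReal_pos 0 1 x one_ne_zero
lemma phi_cont : Continuous phi := by
  unfold phi gaussianPDFReal; fun_prop
lemma phi_int : Integrable phi := integrable_gaussianPDFReal 0 1
lemma phi_even (x : ℝ) : phi (-x) = phi x := by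
  unfold phi gaussianPDFReal; norm_num

lemma Phi_eq (x : ℝ) : Phi x = ∫ y in Iic x, phi y := by
  have h : cdf (gaussianReal 0 1) x = ((gaussianReal 0 1) (Iic x)).toReal :=
    cdf_eq_real (μ := gaussianReal 0 1) x
  rw [Phi, h, gaussianReal_apply_eq_integral 0 one_ne_zero]
  exact ENNReal.toReal_ofReal (setIntegral_nonneg measurableSet_Iic fun y _ => phi_nonneg y)

lemma Phi_total : ∫ y, phi y = 1 := integral_gaussianPDFReal_eq_one 0 one_ne_zero

lemma Phi_diff {a b : ℝ} (hab : a ≤ b) : Phi b - Phi a = ∫ y in Ioc a b, phi y := by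
  rw [Phi_eq, Phi_eq, ← Iic_union_Ioc_eq_Iic hab,
    setIntegral_union (Iic_disjoint_Ioc le_rfl) measurableSet_Ioc
      phi_int.integrableOn phi_int.integrableOn]
  ring

lemma Phi_diff' (a b : ℝ) : Phi b - Phi a = ∫ y in a..b, phi y := by
  rcases le_total a b with h | h
  · rw [intervalIntegral.integral_of_le h, ← Phi_diff h]
  · rw [intervalIntegral.integral_symm, intervalIntegral.integral_of_le h, ← Phi_diff h]; ring

lemma Phi_mono : Monotone Phi := monotone_cdf _
lemma Phi_nonneg (x : ℝ) : 0 ≤ Phi x := cdf_nonneg (μ := gaussianReal 0 1) x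
lemma Phi_le_one (x : ℝ) : Phi x ≤ 1 := cdf_le_one (μ := gaussianReal 0 1) x

lemma Phi_strictMono : StrictMono Phi := by
  intro a b hab
  have h : 0 < ∫ y in a..b, phi y :=
    intervalIntegral.intervalIntegral_pos_of_pos_on
      (phi_cont.intervalIntegrable a b) (fun x _ => phi_pos x) hab
  have := Phi_diff' a b
  linarith

lemma Phi_neg (x : ℝ) : Phi (-x) = 1 - Phi x := by
  have h1 : Phi (-x) = ∫ y in Ioi x, phi y := by
    rw [Phi_eq, ← integral_comp_neg_Ioi]
    simp_rw [phi_even]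
  have h2 : (∫ y in Iic x, phi y) + ∫ y in Ioi x, phi y = 1 := by
    rw [← setIntegral_union (Iic_disjoint_Ioi le_rfl) measurableSet_Ioi
      phi_int.integrableOn phi_int.integrableOn, Iic_union_Ioi, setIntegral_univ, Phi_total]
  rw [h1, ← Phi_eq] at *
  linarith

lemma phi_le_phi {a b : ℝ} (h : b ^ 2 ≤ a ^ 2) : phi a ≤ phi b := by
  unfold phi gaussianPDFReal
  have he : Real.exp (-(a - 0) ^ 2 / (2 * (1:NNReal))) ≤ Real.exp (-(b - 0) ^ 2 / (2 * (1:NNReal))) := by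
    apply Real.exp_le_exp.mpr
    push_cast
    nlinarith
  exact mul_le_mul_of_nonneg_left he (by positivity)

lemma Phi_key {t : ℝ} (ht : 0 ≤ t) (u : ℝ) (hu : 0 ≤ u) :
    Phi (u + t) - Phi (u - t) ≤ Phi t - Phi (-t) := by
  have e1 : Phi t - Phi (-t) = ∫ y in (-t)..t, phi y := Phi_diff' _ _
  have e2 : Phi (u + t) - Phi (u - t) = ∫ y in (u-t)..(u+t), phi y := Phi_diff' _ _
  have sp : ∫ y in (-t)..t, phi y = (∫ y in (-t)..(u-t), phi y) + ∫ y in (u-t)..t, phi y :=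
    (intervalIntegral.integral_add_adjacent_intervals
      (phi_cont.intervalIntegrable _ _) (phi_cont.intervalIntegrable _ _)).symm
  have sp2 : ∫ y in (u-t)..(u+t), phi y = (∫ y in (u-t)..t, phi y) + ∫ y in t..(u+t), phi y :=
    (intervalIntegral.integral_add_adjacent_intervals
      (phi_cont.intervalIntegrable _ _) (phi_cont.intervalIntegrable _ _)).symm
  have shift : ∫ y in t..(u+t), phi y = ∫ y in (-t)..(u-t), phi (y + 2*t) := by
    rw [intervalIntegral.integral_comp_add_right]
    ring_nf
  have key : ∫ y in (-t)..(u-t), phi (y + 2*t) ≤ ∫ y in (-t)..(u-t), phi y := by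
    apply intervalIntegral.integral_mono_on (by linarith)
      ((phi_cont.comp (by fun_prop)).intervalIntegrable _ _)
      (phi_cont.intervalIntegrable _ _)
    intro y hy
    have h2 : phi (y + 2 * t) ≤ phi y := phi_le_phi (by nlinarith [hy.1, ht])
    simpa using h2
  linarith

lemma Phi_key' {t : ℝ} (ht : 0 ≤ t) (u : ℝ) :
    Phi (u + t) - Phi (u - t) ≤ 2 * Phi t - 1 := by
  have hsym : Phi t - Phi (-t) = 2 * Phi t - 1 := by rw [Phi_neg]; ring
  rcases le_total 0 u with hu | hu
  · linarith [Phi_key ht u hu]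
  · have h := Phi_key ht (-u) (by linarith)
    rw [show -u + t = -(u - t) by ring, show -u - t = -(u + t) by ring, Phi_neg, Phi_neg] at h
    linarith

-- more helper lemmas
lemma Phi_zero : Phi 0 = 1/2 := by have := Phi_neg 0; rw [neg_zero] at this; linarith

lemma Phi_inj : Function.Injective Phi := Phi_strictMono.injective

lemma int_Iic (x : ℝ) : ∫ y in Iic x, phi y = Phi x := (Phi_eq x).symm
lemma int_Iio (x : ℝ) : ∫ y in Iio x, phi y = Phi x := by
  rw [setIntegral_congr_set Iio_ae_eq_Iic]; exact (Phi_eq x).symm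
lemma int_Ioi (x : ℝ) : ∫ y in Ioi x, phi y = 1 - Phi x := by
  have h2 : (∫ y in Iic x, phi y) + ∫ y in Ioi x, phi y = 1 := by
    rw [← setIntegral_union (Iic_disjoint_Ioi le_rfl) measurableSet_Ioi
      phi_int.integrableOn phi_int.integrableOn, Iic_union_Ioi, setIntegral_univ, Phi_total]
  have := Phi_eq x; linarith
lemma int_Ici (x : ℝ) : ∫ y in Ici x, phi y = 1 - Phi x := by
  rw [setIntegral_congr_set (Ioi_ae_eq_Ici).symm]; exact int_Ioi x
lemma int_Ico {a b : ℝ} (hab : a ≤ b) : ∫ y in Ico a b, phi y = Phi b - Phi a := by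
  rw [setIntegral_congr_set Ico_ae_eq_Ioc, ← Phi_diff hab]

lemma Phi_measurable : Measurable Phi := Phi_mono.measurable

-- integrability helper
lemma hint_gen (g : ℝ → ℝ) (hg : Measurable g) (hb : ∀ y, |g y| ≤ 1) (S : Set ℝ) :
    IntegrableOn (fun y => g y * phi y) S := by
  apply Integrable.integrableOn
  apply Integrable.mono' phi_int ((hg.mul phi_cont.measurable).aestronglyMeasurable)
  refine ae_of_all _ fun y => ?_
  rw [Real.norm_eq_abs, Pi.mul_apply, abs_mul, abs_of_nonneg (phi_nonneg y)]
  calc |g y| * phi y ≤ 1 * phi y := by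
        exact mul_le_mul_of_nonneg_right (hb y) (phi_nonneg y)
    _ = phi y := one_mul _

set_option maxHeartbeats 2000000 in
/-- For a bivariate standard normal pair with correlation `ρ`, slicing `Y` at its `l/G`-th
quantiles `c l` (so slice `l` is `[c l, c (l+1))`, with the extreme slices unbounded), the
pairwise-maximum Kolmogorov statistic equals
`G ∫_{-∞}^{Φ⁻¹(1/G)} (2Φ(-|ρ|y/√(1-ρ²)) - 1) φ(y) dy`. -/
theorem stmt_5
    (G : ℕ) (hG : 2 ≤ G)
    (ρ : ℝ) (hρ : ρ ∈ Set.Ioo (-1 : ℝ) 1)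
    (Φ : ℝ → ℝ) (hΦ : Φ = fun x => (cdf (gaussianReal 0 1)) x)
    (φ : ℝ → ℝ) (hφ : φ = gaussianPDFReal 0 1)
    (F : ℝ → ℝ → ℝ)
    (hF : F = fun x y => Φ ((x - ρ * y) / Real.sqrt (1 - ρ ^ 2)))
    (c : ℕ → ℝ) (hc : ∀ l : ℕ, 1 ≤ l → l ≤ G - 1 → Φ (c l) = (l : ℝ) / G)
    (slice : Fin G → Set ℝ)
    (hslice : ∀ l : Fin G,
      slice l = {y : ℝ | (l.val ≠ 0 → c l.val ≤ y) ∧ (l.val ≠ G - 1 → y < c (l.val + 1))})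
    (FH : Fin G → ℝ → ℝ)
    (hFH : ∀ l x, FH l x = G * ∫ y in slice l, F x y * φ y)
    (KG : ℝ)
    (hKG : KG = ⨆ l : Fin G, ⨆ m : Fin G, ⨆ x : ℝ, |FH l x - FH m x|) :
    KG = G * ∫ y in Set.Iio (c 1),
      (2 * Φ (-|ρ| * y / Real.sqrt (1 - ρ ^ 2)) - 1) * φ y := by
  have hΦ' : Φ = Phi := hΦ
  have hφ' : φ = phi := hφ
  subst hΦ' hφ' hF hKG
  set s : ℝ := Real.sqrt (1 - ρ ^ 2) with hs_def
  have hs : 0 < s := Real.sqrt_pos.mpr (by nlinarith [hρ.1, hρ.2])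
  have hG0 : (0:ℝ) < G := by positivity
  -- quantile facts
  have hc1 : Phi (c 1) = 1 / G := by
    have := hc 1 le_rfl (by omega); simpa using this
  have hcmono : ∀ l m : ℕ, 1 ≤ l → l ≤ m → m ≤ G - 1 → c l ≤ c m := by
    intro l m h1 h2 h3
    have e1 := hc l h1 (le_trans h2 h3)
    have e2 := hc m (le_trans h1 h2) h3
    have : Phi (c l) ≤ Phi (c m) := by
      rw [e1, e2, div_le_div_iff₀ hG0 hG0]
      have : (l:ℝ) ≤ m := by exact_mod_cast h2
      nlinarith
    exact Phi_strictMono.le_iff_le.mp this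
  have hc1le : c 1 ≤ 0 := by
    have h12 : (1:ℝ)/G ≤ 1/2 := by
      rw [div_le_div_iff₀ hG0 (by norm_num)]
      have : (2:ℝ) ≤ G := by exact_mod_cast hG
      linarith
    have : Phi (c 1) ≤ Phi 0 := by rw [hc1, Phi_zero]; exact h12
    exact Phi_strictMono.le_iff_le.mp this
  have hneg : c (G - 1) = -(c 1) := by
    apply Phi_inj
    rw [Phi_neg, hc1, hc (G-1) (by omega) le_rfl]
    have : ((G - 1 : ℕ) : ℝ) = (G:ℝ) - 1 := by
      have : (1:ℕ) ≤ G := by omega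
      push_cast [Nat.cast_sub this]; ring
    rw [this]; field_simp
  -- slice classification
  have hclass : ∀ m : Fin G,
      (m.val = 0 ∧ slice m = Iio (c 1)) ∨
      (m.val = G - 1 ∧ slice m = Ici (c (G-1))) ∨
      (1 ≤ m.val ∧ m.val + 1 ≤ G - 1 ∧ slice m = Ico (c m.val) (c (m.val + 1))) := by
    intro m
    rcases Nat.eq_zero_or_pos m.val with h0 | h0
    · left
      refine ⟨h0, ?_⟩
      rw [hslice m, h0]
      ext y
      simp only [Set.mem_setOf_eq, Set.mem_Iio]
      constructor
      · intro h; exact h.2 (by omega)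
      · intro h; exact ⟨by omega, fun _ => h⟩
    · rcases eq_or_lt_of_le (Nat.le_sub_one_of_lt m.isLt) with hlast | hmid
      · right; left
        refine ⟨hlast, ?_⟩
        rw [hslice m, hlast]
        ext y
        simp only [Set.mem_setOf_eq, Set.mem_Ici]
        constructor
        · intro h; exact h.1 (by omega)
        · intro h; exact ⟨fun _ => h, by omega⟩
      · right; right
        refine ⟨h0, by omega, ?_⟩
        rw [hslice m]
        ext y
        simp only [Set.mem_setOf_eq, Set.mem_Ico]
        constructor
        · intro h; exact ⟨h.1 (by omega), h.2 (by omega)⟩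
        · intro h; exact ⟨fun _ => h.1, fun _ => h.2⟩
  have hmeas : ∀ m : Fin G, MeasurableSet (slice m) := by
    intro m
    rcases hclass m with ⟨_, h⟩ | ⟨_, h⟩ | ⟨_, _, h⟩ <;> rw [h] <;> measurability
  -- masses
  have hmass : ∀ m : Fin G, ∫ y in slice m, phi y = 1 / G := by
    intro m
    rcases hclass m with ⟨_, h⟩ | ⟨_, h⟩ | ⟨h1, h2, h⟩ <;> rw [h]
    · rw [int_Iio, hc1]
    · rw [int_Ici, hc (G-1) (by omega) le_rfl]
      have : ((G - 1 : ℕ) : ℝ) = (G:ℝ) - 1 := by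
        have h1 : (1:ℕ) ≤ G := by omega
        push_cast [Nat.cast_sub h1]; ring
      rw [this]; field_simp; ring
    · rw [int_Ico (hcmono _ _ h1 (by omega) h2),
        hc _ h1 (by omega), hc _ (by omega) h2]
      push_cast
      field_simp
      ring
  -- subsets
  have hsub1 : ∀ m : Fin G, m.val ≠ 0 → slice m ⊆ Ici (c 1) := by
    intro m hm0
    rcases hclass m with ⟨h, _⟩ | ⟨_, h⟩ | ⟨h1, h2, h⟩
    · exact absurd h hm0
    · rw [h]; exact Ici_subset_Ici.mpr (hcmono 1 (G-1) le_rfl (by omega) le_rfl)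
    · rw [h]
      exact (Ico_subset_Ici_self).trans (Ici_subset_Ici.mpr (hcmono 1 m.val le_rfl h1 (by omega)))
  have hsub2 : ∀ m : Fin G, m.val ≠ G - 1 → slice m ⊆ Iio (-(c 1)) := by
    intro m hm0
    rcases hclass m with ⟨_, h⟩ | ⟨h, _⟩ | ⟨h1, h2, h⟩
    · rw [h]; exact Iio_subset_Iio (by linarith)
    · exact absurd h hm0
    · rw [h, ← hneg]
      exact (Ico_subset_Iio_self).trans (Iio_subset_Iio (hcmono _ _ (by omega) h2 le_rfl))
  have hIci_mass : ∫ y in Ici (-(c 1)), phi y = 1 / G := by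
    rw [int_Ici, Phi_neg, hc1]; ring
  -- sandwich
  have sandwich : ∀ g : ℝ → ℝ, Antitone g → (∀ y, 0 ≤ g y) → (∀ y, g y ≤ 1) →
      ∀ m : Fin G,
      (∫ y in Ici (-(c 1)), g y * phi y) ≤ (∫ y in slice m, g y * phi y) ∧
      (∫ y in slice m, g y * phi y) ≤ ∫ y in Iio (c 1), g y * phi y := by
    intro g hg h0 h1 m
    have hgm : Measurable g := hg.measurable
    have hgabs : ∀ y, |g y| ≤ 1 := fun y => abs_le.mpr ⟨by linarith [h0 y], h1 y⟩
    have hintg : ∀ S : Set ℝ, IntegrableOn (fun y => g y * phi y) S := hint_gen g hgm hgabs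
    have hintc : ∀ (a : ℝ) (S : Set ℝ), IntegrableOn (fun y => g a * phi y) S :=
      fun a S => (phi_int.const_mul (g a)).integrableOn
    have upper : (∫ y in slice m, g y * phi y) ≤ ∫ y in Iio (c 1), g y * phi y := by
      by_cases hm0 : m.val = 0
      · rcases hclass m with ⟨_, h⟩ | ⟨h, _⟩ | ⟨h', _, _⟩
        · rw [h]
        · omega
        · omega
      · calc (∫ y in slice m, g y * phi y) ≤ ∫ y in slice m, g (c 1) * phi y := by
              apply setIntegral_mono_on (hintg _) (hintc _ _) (hmeas m)
              intro y hy
              exact mul_le_mul_of_nonneg_right (hg (hsub1 m hm0 hy)) (phi_nonneg y)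
          _ = g (c 1) * (1/G) := by rw [MeasureTheory.integral_const_mul, hmass m]
          _ = ∫ y in Iio (c 1), g (c 1) * phi y := by
              rw [MeasureTheory.integral_const_mul, int_Iio, hc1]
          _ ≤ ∫ y in Iio (c 1), g y * phi y := by
              apply setIntegral_mono_on (hintc _ _) (hintg _) measurableSet_Iio
              intro y hy
              exact mul_le_mul_of_nonneg_right (hg (le_of_lt hy)) (phi_nonneg y)
    have lower : (∫ y in Ici (-(c 1)), g y * phi y) ≤ ∫ y in slice m, g y * phi y := by
      by_cases hmG : m.val = G - 1
      · rcases hclass m with ⟨h', _⟩ | ⟨_, h⟩ | ⟨_, h', _⟩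
        · omega
        · rw [h, hneg]
        · omega
      · calc (∫ y in Ici (-(c 1)), g y * phi y) ≤ ∫ y in Ici (-(c 1)), g (-(c 1)) * phi y := by
              apply setIntegral_mono_on (hintg _) (hintc _ _) measurableSet_Ici
              intro y hy
              exact mul_le_mul_of_nonneg_right (hg hy) (phi_nonneg y)
          _ = g (-(c 1)) * (1/G) := by rw [MeasureTheory.integral_const_mul, hIci_mass]
          _ = ∫ y in slice m, g (-(c 1)) * phi y := by rw [MeasureTheory.integral_const_mul, hmass m]
          _ ≤ ∫ y in slice m, g y * phi y := by
              apply setIntegral_mono_on (hintc _ _) (hintg _) (hmeas m)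
              intro y hy
              exact mul_le_mul_of_nonneg_right (hg (le_of_lt (hsub2 m hmG hy))) (phi_nonneg y)
    exact ⟨lower, upper⟩
  simp only at hFH
  set V : ℝ := (G:ℝ) * ∫ y in Set.Iio (c 1),
      (2 * Phi (-|ρ| * y / s) - 1) * phi y with hV
  set A : ℝ → ℝ := fun x => (G:ℝ) * ∫ y in Iio (c 1), Phi ((x - ρ*y)/s) * phi y with hA
  set B : ℝ → ℝ := fun x => (G:ℝ) * ∫ y in Ici (-(c 1)), Phi ((x - ρ*y)/s) * phi y with hB
  -- measurability/integrability of inner functions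
  have hPm : ∀ x : ℝ, Measurable (fun y => Phi ((x - ρ*y)/s)) := by
    intro x; exact Phi_measurable.comp (by fun_prop)
  have hPabs : ∀ x y : ℝ, |Phi ((x - ρ*y)/s)| ≤ 1 := by
    intro x y
    rw [abs_of_nonneg (Phi_nonneg _)]; exact Phi_le_one _
  have hPint : ∀ (x : ℝ) (S : Set ℝ), IntegrableOn (fun y => Phi ((x - ρ*y)/s) * phi y) S :=
    fun x S => hint_gen _ (hPm x) (hPabs x) S
  have hPm2 : ∀ x : ℝ, Measurable (fun y => Phi ((x + ρ*y)/s)) := by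
    intro x; exact Phi_measurable.comp (by fun_prop)
  have hPint2 : ∀ (x : ℝ) (S : Set ℝ), IntegrableOn (fun y => Phi ((x + ρ*y)/s) * phi y) S := by
    intro x S
    apply hint_gen (fun y => Phi ((x + ρ*y)/s)) (hPm2 x)
    intro y
    rw [abs_of_nonneg (Phi_nonneg _)]; exact Phi_le_one _
  -- B as integral over Iio (c 1)
  have hBalt : ∀ x : ℝ, (∫ y in Ici (-(c 1)), Phi ((x - ρ*y)/s) * phi y)
      = ∫ y in Iio (c 1), Phi ((x + ρ*y)/s) * phi y := by
    intro x
    rw [setIntegral_congr_set (Ioi_ae_eq_Ici (a := -(c 1))).symm,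
      ← integral_comp_neg_Iic (c 1) (fun y => Phi ((x - ρ*y)/s) * phi y),
      setIntegral_congr_set (Iio_ae_eq_Iic (a := c 1)).symm]
    apply setIntegral_congr_fun measurableSet_Iio
    intro y _
    simp only [phi_even, mul_neg, neg_neg, sub_neg_eq_add]
  have hABdiff : ∀ x : ℝ, A x - B x
      = G * ∫ y in Iio (c 1), (Phi ((x - ρ*y)/s) - Phi ((x + ρ*y)/s)) * phi y := by
    intro x
    rw [hA, hB]
    simp only
    rw [hBalt x, ← mul_sub, ← integral_sub (hPint x _) (hPint2 x _)]
    congr 1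
    apply setIntegral_congr_fun measurableSet_Iio
    intro y _
    ring
  -- pointwise bound
  have hpt : ∀ x y : ℝ, y ≤ 0 →
      |Phi ((x - ρ*y)/s) - Phi ((x + ρ*y)/s)| ≤ 2 * Phi (-|ρ| * y / s) - 1 := by
    intro x y hy
    have ht : 0 ≤ -|ρ| * y / s := by
      apply div_nonneg _ hs.le
      nlinarith [abs_nonneg ρ]
    set t : ℝ := -|ρ| * y / s with htdef
    set u : ℝ := x / s with hudef
    rcases le_total 0 ρ with hρ0 | hρ0
    · have h1 : (x - ρ*y)/s = u + t := by
        rw [hudef, htdef, abs_of_nonneg hρ0]; field_simp; try ring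
      have h2 : (x + ρ*y)/s = u - t := by
        rw [hudef, htdef, abs_of_nonneg hρ0]; field_simp; try ring
      rw [h1, h2, abs_of_nonneg (by linarith [Phi_mono (show u - t ≤ u + t by linarith)])]
      exact Phi_key' ht u
    · have h1 : (x - ρ*y)/s = u - t := by
        rw [hudef, htdef, abs_of_nonpos hρ0]; field_simp; try ring
      have h2 : (x + ρ*y)/s = u + t := by
        rw [hudef, htdef, abs_of_nonpos hρ0]; field_simp; try ring
      rw [h1, h2, abs_of_nonpos (by linarith [Phi_mono (show u - t ≤ u + t by linarith)]),
        neg_sub]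
      exact Phi_key' ht u
  -- bound integrand integrable
  have hbint : IntegrableOn (fun y => (2 * Phi (-|ρ| * y / s) - 1) * phi y) (Iio (c 1)) := by
    have hm : Measurable (fun y : ℝ => Phi (-|ρ| * y / s)) := Phi_measurable.comp (by fun_prop)
    apply hint_gen (fun y => 2 * Phi (-|ρ| * y / s) - 1) ((hm.const_mul 2).sub measurable_const)
    intro y
    rw [abs_le]
    constructor <;> linarith [Phi_nonneg (-|ρ| * y / s), Phi_le_one (-|ρ| * y / s)]
  have hABle : ∀ x : ℝ, |A x - B x| ≤ V := by
    intro x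
    rw [hABdiff x, hV, abs_mul, abs_of_nonneg hG0.le]
    apply mul_le_mul_of_nonneg_left _ hG0.le
    have habsint : IntegrableOn
        (fun y => |Phi ((x - ρ*y)/s) - Phi ((x + ρ*y)/s)| * phi y) (Iio (c 1)) := by
      apply hint_gen (fun y => |Phi ((x - ρ*y)/s) - Phi ((x + ρ*y)/s)|)
        (((hPm x).sub (hPm2 x)).abs)
      intro y
      rw [abs_abs]
      exact abs_le.mpr ⟨by linarith [Phi_nonneg ((x - ρ*y)/s), Phi_le_one ((x + ρ*y)/s)],
        by linarith [Phi_le_one ((x - ρ*y)/s), Phi_nonneg ((x + ρ*y)/s)]⟩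
    calc |∫ y in Iio (c 1), (Phi ((x - ρ*y)/s) - Phi ((x + ρ*y)/s)) * phi y|
        ≤ ∫ y in Iio (c 1), |Phi ((x - ρ*y)/s) - Phi ((x + ρ*y)/s)| * phi y := by
          have h := MeasureTheory.norm_integral_le_integral_norm
            (μ := (volume : Measure ℝ).restrict (Iio (c 1)))
            (f := fun y => (Phi ((x - ρ*y)/s) - Phi ((x + ρ*y)/s)) * phi y)
          simpa [Real.norm_eq_abs, abs_mul, abs_of_nonneg, phi_nonneg] using h
      _ ≤ ∫ y in Iio (c 1), (2 * Phi (-|ρ| * y / s) - 1) * phi y := by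
          apply setIntegral_mono_on habsint hbint measurableSet_Iio
          intro y hy
          exact mul_le_mul_of_nonneg_right
            (hpt x y (by simp only [mem_Iio] at hy; linarith)) (phi_nonneg y)
  -- value at 0
  have hA0B0 : A 0 - B 0 = (G:ℝ) * ∫ y in Iio (c 1), (2 * Phi (-(ρ * y) / s) - 1) * phi y := by
    rw [hABdiff 0]
    congr 1
    apply setIntegral_congr_fun measurableSet_Iio
    intro y _
    show (Phi ((0 - ρ*y)/s) - Phi ((0 + ρ*y)/s)) * phi y = (2 * Phi (-(ρ * y) / s) - 1) * phi y
    have h3 : Phi ((0 + ρ*y)/s) = 1 - Phi ((0 - ρ*y)/s) := by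
      have h4 := Phi_neg ((0 + ρ*y)/s)
      rw [show -((0 + ρ*y)/s) = (0 - ρ*y)/s by ring] at h4
      linarith
    rw [h3, show (0 - ρ*y)/s = -(ρ*y)/s by ring]
    ring
  have hVnonneg : 0 ≤ V := by
    rw [hV]
    apply mul_nonneg hG0.le
    apply setIntegral_nonneg measurableSet_Iio
    intro y hy
    apply mul_nonneg _ (phi_nonneg y)
    have hy0 : y ≤ 0 := by rw [mem_Iio] at hy; linarith
    have ht : (0:ℝ) ≤ -|ρ| * y / s := div_nonneg (by nlinarith [abs_nonneg ρ]) hs.le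
    have := Phi_mono ht
    rw [Phi_zero] at this
    linarith
  have habs0 : |A 0 - B 0| = V := by
    rcases le_total 0 ρ with h | h
    · have heq : A 0 - B 0 = V := by
        rw [hA0B0, hV]
        congr 1
        apply setIntegral_congr_fun measurableSet_Iio
        intro y _
        show (2 * Phi (-(ρ * y) / s) - 1) * phi y = (2 * Phi (-|ρ| * y / s) - 1) * phi y
        rw [_root_.abs_of_nonneg h, show -(ρ*y)/s = -ρ * y / s by ring]
      rw [heq, abs_of_nonneg hVnonneg]
    · have heq : A 0 - B 0 = -V := by
        rw [hA0B0, hV, ← mul_neg, ← MeasureTheory.integral_neg]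
        congr 1
        apply setIntegral_congr_fun measurableSet_Iio
        intro y _
        show (2 * Phi (-(ρ * y) / s) - 1) * phi y = -((2 * Phi (-|ρ| * y / s) - 1) * phi y)
        have h4 : -(ρ*y)/s = -(-|ρ| * y / s) := by rw [_root_.abs_of_nonpos h]; ring
        rw [h4, Phi_neg]
        ring
      rw [heq, abs_neg, abs_of_nonneg hVnonneg]
  -- FH sandwiched between A and B
  have key : ∀ (k : Fin G) (x : ℝ),
      min (A x) (B x) ≤ FH k x ∧ FH k x ≤ max (A x) (B x) := by
    intro k x
    rcases le_total 0 ρ with h | h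
    · have hanti : Antitone (fun y => Phi ((x - ρ*y)/s)) := by
        intro y z hyz
        apply Phi_mono
        exact (div_le_div_iff_of_pos_right hs).mpr (by nlinarith)
      obtain ⟨hl, hu⟩ := sandwich _ hanti (fun y => Phi_nonneg _) (fun y => Phi_le_one _) k
      rw [hFH k x]
      constructor
      · calc min (A x) (B x) ≤ B x := min_le_right _ _
          _ ≤ (G:ℝ) * ∫ y in slice k, Phi ((x - ρ*y)/s) * phi y :=
            mul_le_mul_of_nonneg_left hl hG0.le
      · calc (G:ℝ) * ∫ y in slice k, Phi ((x - ρ*y)/s) * phi y ≤ A x :=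
            mul_le_mul_of_nonneg_left hu hG0.le
          _ ≤ max (A x) (B x) := le_max_left _ _
    · have hanti : Antitone (fun y => 1 - Phi ((x - ρ*y)/s)) := by
        intro y z hyz
        show 1 - Phi ((x - ρ*z)/s) ≤ 1 - Phi ((x - ρ*y)/s)
        have := Phi_mono ((div_le_div_iff_of_pos_right hs).mpr (show x - ρ*y ≤ x - ρ*z by nlinarith))
        linarith
      obtain ⟨hl, hu⟩ := sandwich _ hanti
        (fun y => show (0:ℝ) ≤ 1 - Phi ((x - ρ*y)/s) by linarith [Phi_le_one ((x - ρ*y)/s)])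
        (fun y => show 1 - Phi ((x - ρ*y)/s) ≤ 1 by linarith [Phi_nonneg ((x - ρ*y)/s)]) k
      have expand : ∀ S : Set ℝ, MeasurableSet S →
          IntegrableOn (fun y => Phi ((x - ρ*y)/s) * phi y) S →
          (∫ y in S, (1 - Phi ((x - ρ*y)/s)) * phi y)
            = (∫ y in S, phi y) - ∫ y in S, Phi ((x - ρ*y)/s) * phi y := by
        intro S hMS hS
        rw [← integral_sub phi_int.integrableOn hS]
        apply setIntegral_congr_fun hMS
        intro y _
        show (1 - Phi ((x - ρ*y)/s)) * phi y = phi y - Phi ((x - ρ*y)/s) * phi y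
        ring
      have e1 := expand _ measurableSet_Ici (hPint x (Ici (-(c 1))))
      have e2 := expand _ (hmeas k) (hPint x (slice k))
      have e3 := expand _ measurableSet_Iio (hPint x (Iio (c 1)))
      rw [e1, e2, hIci_mass, hmass k] at hl
      rw [e2, e3, hmass k, int_Iio, hc1] at hu
      have hAx : A x = (G:ℝ) * ∫ y in Iio (c 1), Phi ((x - ρ*y)/s) * phi y := by rw [hA]
      have hBx : B x = (G:ℝ) * ∫ y in Ici (-(c 1)), Phi ((x - ρ*y)/s) * phi y := by rw [hB]
      constructor
      · calc min (A x) (B x) ≤ A x := min_le_left _ _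
          _ ≤ FH k x := by
            rw [hAx, hFH k x]
            exact mul_le_mul_of_nonneg_left (by linarith) hG0.le
      · have h5 : FH k x ≤ B x := by
          rw [hBx, hFH k x]
          exact mul_le_mul_of_nonneg_left (by linarith) hG0.le
        exact h5.trans (le_max_right _ _)
  -- uniform bound
  have hub : ∀ (l m : Fin G) (x : ℝ), |FH l x - FH m x| ≤ V := by
    intro l m x
    obtain ⟨h1l, h1u⟩ := key l x
    obtain ⟨h2l, h2u⟩ := key m x
    have hmm : max (A x) (B x) - min (A x) (B x) ≤ V := by
      have h := hABle x
      rcases le_total (A x) (B x) with h' | h'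
      · rw [max_eq_right h', min_eq_left h']
        rw [abs_sub_comm] at h
        calc B x - A x ≤ |B x - A x| := le_abs_self _
          _ ≤ V := h
      · rw [max_eq_left h', min_eq_right h']
        calc A x - B x ≤ |A x - B x| := le_abs_self _
          _ ≤ V := h
    rw [abs_le]
    constructor <;> linarith
  -- attainment
  have hFH0 : FH ⟨0, by omega⟩ 0 = A 0 := by
    rcases hclass ⟨0, by omega⟩ with ⟨_, h⟩ | ⟨h, _⟩ | ⟨h, _, _⟩
    · rw [hFH _ 0, h, hA]
    · simp at h; omega
    · simp at h
  have hFHlast : FH ⟨G-1, by omega⟩ 0 = B 0 := by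
    rcases hclass ⟨G-1, by omega⟩ with ⟨h, _⟩ | ⟨_, h⟩ | ⟨_, h, _⟩
    · simp at h; omega
    · rw [hFH _ 0, h, hneg, hB]
    · simp at h
  have hattain : |FH ⟨0, by omega⟩ 0 - FH ⟨G-1, by omega⟩ 0| = V := by
    rw [hFH0, hFHlast]; exact habs0
  -- supremum computation
  haveI : Nonempty (Fin G) := ⟨⟨0, by omega⟩⟩
  have hbdd3 : ∀ l m : Fin G, BddAbove (Set.range fun x => |FH l x - FH m x|) := by
    intro l m
    refine ⟨V, ?_⟩
    rintro _ ⟨x, rfl⟩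
    exact hub l m x
  have hsupx_le : ∀ l m : Fin G, (⨆ x : ℝ, |FH l x - FH m x|) ≤ V :=
    fun l m => ciSup_le (hub l m)
  have hbdd2 : ∀ l : Fin G, BddAbove (Set.range fun m : Fin G => ⨆ x : ℝ, |FH l x - FH m x|) := by
    intro l
    refine ⟨V, ?_⟩
    rintro _ ⟨m, rfl⟩
    exact hsupx_le l m
  have hsupm_le : ∀ l : Fin G, (⨆ m : Fin G, ⨆ x : ℝ, |FH l x - FH m x|) ≤ V :=
    fun l => ciSup_le (hsupx_le l)
  have hbdd1 : BddAbove (Set.range fun l : Fin G => ⨆ m : Fin G, ⨆ x : ℝ, |FH l x - FH m x|) := by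
    refine ⟨V, ?_⟩
    rintro _ ⟨l, rfl⟩
    exact hsupm_le l
  apply le_antisymm
  · exact ciSup_le hsupm_le
  · calc V = |FH ⟨0, by omega⟩ 0 - FH ⟨G-1, by omega⟩ 0| := hattain.symm
      _ ≤ ⨆ x : ℝ, |FH ⟨0, by omega⟩ x - FH ⟨G-1, by omega⟩ x| :=
        le_ciSup (hbdd3 _ _) 0
      _ ≤ ⨆ m : Fin G, ⨆ x : ℝ, |FH ⟨0, by omega⟩ x - FH m x| :=
        le_ciSup (hbdd2 _) ⟨G-1, by omega⟩
      _ ≤ ⨆ l : Fin G, ⨆ m : Fin G, ⨆ x : ℝ, |FH l x - FH m x| :=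
        le_ciSup hbdd1 ⟨0, by omega⟩
end

section
/- In the setting of a bivariate standard normal (X,Y) with correlation rho and uniform quantile slicing into G slices, the quantity K^G(rho) = G * integral_{-infinity}^{Phi^{-1}(1/G)} (2 Phi(-|rho| y / sqrt(1 - rho^2)) - 1) phi(y) dy is, for every fixed G >= 2, a strictly increasing function of |rho| on [0, 1). -/
open MeasureTheory ProbabilityTheory Set

lemma phi_strictMono : StrictMono (cdf (gaussianReal 0 1)) := by
  intro x y hxy
  rw [cdf_eq_real, cdf_eq_real, measureReal_def, measureReal_def]
  have hfin : ∀ s : Set ℝ, gaussianReal 0 1 s ≠ ⊤ := fun s => measure_ne_top _ _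
  have hsplit : gaussianReal 0 1 (Iic y) =
      gaussianReal 0 1 (Iic x) + gaussianReal 0 1 (Ioc x y) := by
    rw [← measure_union (by exact Iic_disjoint_Ioc le_rfl) measurableSet_Ioc,
      Iic_union_Ioc_eq_Iic hxy.le]
  have hpos : 0 < gaussianReal 0 1 (Ioc x y) := by
    rw [gaussianReal_apply_eq_integral 0 one_ne_zero, ENNReal.ofReal_pos,
      ← intervalIntegral.integral_of_le hxy.le]
    exact intervalIntegral.intervalIntegral_pos_of_pos_on
      ((integrable_gaussianPDFReal 0 1).intervalIntegrable)
      (fun z _ => gaussianPDFReal_pos 0 1 z one_ne_zero) hxy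
  rw [ENNReal.toReal_lt_toReal (hfin _) (hfin _), hsplit]
  exact ENNReal.lt_add_right (hfin _) hpos.ne'

lemma phi_zero : cdf (gaussianReal 0 1) 0 = 1 / 2 := by
  set μ := gaussianReal 0 1 with hμ
  have hmap : μ.map (fun x => (-1 : ℝ) * x) = μ := by
    rw [hμ, gaussianReal_map_const_mul (-1)]; norm_num
  have hsym : μ (Ici 0) = μ (Iic 0) := by
    conv_rhs => rw [← hmap]
    rw [Measure.map_apply (by fun_prop) measurableSet_Iic]
    congr 1; ext z; simp [neg_nonpos]
  have hzero : μ {(0 : ℝ)} = 0 :=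
    gaussianReal_absolutelyContinuous 0 one_ne_zero (measure_singleton 0)
  have hIoi : μ (Ioi 0) = μ (Iic 0) := by
    rw [← hsym, ← Ioi_union_left,
      measure_union (by simp) (measurableSet_singleton 0), hzero, add_zero]
  have htot : μ (Iic 0) + μ (Iic 0) = 1 := by
    have := measure_add_measure_compl (μ := μ) (measurableSet_Iic (a := (0:ℝ)))
    rw [compl_Iic, hIoi] at this; rw [this, hμ]; exact measure_univ
  have h2 : μ (Iic 0) = 1 / 2 := by
    rw [(ENNReal.eq_div_iff two_ne_zero ENNReal.ofNat_ne_top), two_mul]; exact htot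
  rw [cdf_eq_real, measureReal_def, h2]
  simp [ENNReal.toReal_div]

/-- For a fixed number of slices `G ≥ 2` and `q = Φ⁻¹(1/G)`, the map
`r ↦ G ∫_{-∞}^{q} (2Φ(-ry/√(1-r²)) - 1) φ(y) dy` is strictly increasing on `[0, 1)`;
i.e., `K^G` is strictly increasing in `|ρ|`. -/
theorem stmt_6
    (G : ℕ) (hG : 2 ≤ G)
    (Φ : ℝ → ℝ) (hΦ : Φ = fun x => (cdf (gaussianReal 0 1)) x)
    (φ : ℝ → ℝ) (hφ : φ = gaussianPDFReal 0 1)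
    (q : ℝ) (hq : Φ q = 1 / G) :
    StrictMonoOn
      (fun r : ℝ => (G : ℝ) * ∫ y in Set.Iio q,
        (2 * Φ (-(r * y) / Real.sqrt (1 - r ^ 2)) - 1) * φ y)
      (Set.Ico (0 : ℝ) 1) := by
  have hΦmono : StrictMono Φ := by rw [hΦ]; exact phi_strictMono
  have hΦmeas : Measurable Φ := hΦmono.monotone.measurable
  have hΦ01 : ∀ x, 0 ≤ Φ x ∧ Φ x ≤ 1 := by
    intro x; rw [hΦ]; exact ⟨cdf_nonneg _ x, cdf_le_one _ x⟩
  have hφpos : ∀ y, 0 < φ y := by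
    intro y; rw [hφ]; exact gaussianPDFReal_pos 0 1 y one_ne_zero
  have hGpos : (0 : ℝ) < G := by positivity
  have hq0 : q ≤ 0 := by
    have hG2 : (2 : ℝ) ≤ G := by exact_mod_cast hG
    have h12 : Φ q ≤ Φ 0 := by
      rw [hq, hΦ]; simp only []
      rw [phi_zero]
      rw [one_div, one_div]
      exact inv_anti₀ (by norm_num) hG2
    exact hΦmono.le_iff_le.mp h12
  -- integrability of the integrand for any r
  have hint : ∀ r : ℝ, Integrable
      (fun y => (2 * Φ (-(r * y) / Real.sqrt (1 - r ^ 2)) - 1) * φ y)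
      (volume.restrict (Iio q)) := by
    intro r
    refine Integrable.mono ((hφ ▸ integrable_gaussianPDFReal 0 1).restrict) ?_ ?_
    · exact (((hΦmeas.comp (by fun_prop)).const_mul 2).sub measurable_const).mul
        (by rw [hφ]; exact measurable_gaussianPDFReal 0 1) |>.aestronglyMeasurable
    · refine ae_of_all _ fun y => ?_
      rw [Real.norm_eq_abs, Real.norm_eq_abs, abs_mul, abs_of_pos (hφpos y)]
      have h1 := (hΦ01 (-(r * y) / Real.sqrt (1 - r ^ 2))).1
      have h2 := (hΦ01 (-(r * y) / Real.sqrt (1 - r ^ 2))).2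
      nlinarith [abs_le.mpr (⟨by linarith, by linarith⟩ :
        -1 ≤ 2 * Φ (-(r * y) / Real.sqrt (1 - r ^ 2)) - 1 ∧
        2 * Φ (-(r * y) / Real.sqrt (1 - r ^ 2)) - 1 ≤ 1), hφpos y, abs_nonneg
        (2 * Φ (-(r * y) / Real.sqrt (1 - r ^ 2)) - 1)]
  intro r1 hr1 r2 hr2 h12
  obtain ⟨hr10, hr11⟩ := hr1
  obtain ⟨hr20, hr21⟩ := hr2
  have hs2pos : 0 < Real.sqrt (1 - r2 ^ 2) := by
    apply Real.sqrt_pos.mpr; nlinarith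
  have hs1pos : 0 < Real.sqrt (1 - r1 ^ 2) := by
    apply Real.sqrt_pos.mpr; nlinarith
  have hs21 : Real.sqrt (1 - r2 ^ 2) ≤ Real.sqrt (1 - r1 ^ 2) := by
    apply Real.sqrt_le_sqrt; nlinarith
  have hratio : r1 / Real.sqrt (1 - r1 ^ 2) < r2 / Real.sqrt (1 - r2 ^ 2) := by
    calc r1 / Real.sqrt (1 - r1 ^ 2) ≤ r1 / Real.sqrt (1 - r2 ^ 2) := by gcongr
      _ < r2 / Real.sqrt (1 - r2 ^ 2) := by gcongr
  -- pointwise strict inequality on Iio q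
  have hpt : ∀ y ∈ Iio q,
      (2 * Φ (-(r1 * y) / Real.sqrt (1 - r1 ^ 2)) - 1) * φ y <
      (2 * Φ (-(r2 * y) / Real.sqrt (1 - r2 ^ 2)) - 1) * φ y := by
    intro y hy
    have hy0 : y < 0 := lt_of_lt_of_le hy hq0
    have harg : -(r1 * y) / Real.sqrt (1 - r1 ^ 2) <
        -(r2 * y) / Real.sqrt (1 - r2 ^ 2) := by
      have e1 : ∀ r s : ℝ, -(r * y) / s = (-y) * (r / s) := by
        intro r s; ring
      rw [e1, e1]
      exact mul_lt_mul_of_pos_left hratio (by linarith)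
    have := hΦmono harg
    have := hφpos y
    nlinarith
  -- strict inequality of integrals
  set F1 : ℝ → ℝ := fun y => (2 * Φ (-(r1 * y) / Real.sqrt (1 - r1 ^ 2)) - 1) * φ y
  set F2 : ℝ → ℝ := fun y => (2 * Φ (-(r2 * y) / Real.sqrt (1 - r2 ^ 2)) - 1) * φ y
  have hsub : 0 < ∫ y in Iio q, (F2 y - F1 y) := by
    rw [setIntegral_pos_iff_support_of_nonneg_ae]
    · refine lt_of_lt_of_le ?_ (measure_mono (fun y hy =>
        (⟨(sub_pos.mpr (hpt y hy)).ne', hy⟩ :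
          y ∈ Function.support (fun y => F2 y - F1 y) ∩ Iio q)))
      rw [Real.volume_Iio]
      exact ENNReal.zero_lt_top
    · exact (ae_restrict_iff' measurableSet_Iio).mpr
        (ae_of_all _ fun y hy => (sub_pos.mpr (hpt y hy)).le)
    · exact (hint r2).sub (hint r1)
  rw [integral_sub (hint r2) (hint r1)] at hsub
  simp only []
  have : ∫ y in Iio q, F1 y < ∫ y in Iio q, F2 y := by linarith
  exact mul_lt_mul_of_pos_left this hGpos
end
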